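/- Let ρ = p|φ₁⟩⟨φ₁| + (1−p)|φ₂⟩⟨φ₂| with |φ₁⟩ = x₁|000⟩ + x₂|111⟩, |φ₂⟩ = −x₂|000⟩ + x₁|111⟩, x₁² + x₂² = 1, 1/2 ≤ p ≤ 1, x₁,x₂ ≥ 0. Then for any product state |φ⟩, ⟨φ|ρ|φ⟩ ≤ (p x₁² + (1−p)x₂²)c⁶ + ((1−p)x₁² + p x₂²)s⁶ + 2(2p−1)x₁x₂ c³ s³ for some c = cos α, s = sin α with α ∈ [0, π/2]. -/
import Mathlib


open Matrix Complex

/-- `|φ₁⟩ = x₁|000⟩ + x₂|111⟩`. -/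
noncomputable def phi1 (x₁ x₂ : ℝ) : Fin 2 × Fin 2 × Fin 2 → ℂ := fun p =>
  if p = (0, 0, 0) then (x₁ : ℂ) else if p = (1, 1, 1) then (x₂ : ℂ) else 0

/-- `|φ₂⟩ = −x₂|000⟩ + x₁|111⟩`. -/
noncomputable def phi2 (x₁ x₂ : ℝ) : Fin 2 × Fin 2 × Fin 2 → ℂ := fun p =>
  if p = (0, 0, 0) then (-x₂ : ℂ) else if p = (1, 1, 1) then (x₁ : ℂ) else 0

/-- AM–GM for three nonnegative reals. -/
lemma amgm3 (x y z : ℝ) (hx : 0 ≤ x) (hy : 0 ≤ y) (hz : 0 ≤ z) :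
    x * y * z ≤ ((x + y + z) / 3) ^ 3 := by
  nlinarith [sq_nonneg (x - y), sq_nonneg (y - z), sq_nonneg (x - z), sq_nonneg (x + y + z),
    mul_nonneg hx hy, mul_nonneg hy hz, mul_nonneg hx hz,
    mul_nonneg (mul_nonneg hx hy) hz]

lemma normSq_comb (A B : ℂ) (x₁ x₂ : ℝ) :
    Complex.normSq (A * x₁ + B * x₂)
      = x₁ ^ 2 * Complex.normSq A + x₂ ^ 2 * Complex.normSq B
        + 2 * x₁ * x₂ * (A * (starRingEnd ℂ) B).re := by
  simp [Complex.normSq_apply, Complex.add_re, Complex.add_im, Complex.mul_re, Complex.mul_im]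
  ring

theorem stmt18 (p x₁ x₂ : ℝ) (hx : x₁ ^ 2 + x₂ ^ 2 = 1)
    (hx₁ : 0 ≤ x₁) (hx₂ : 0 ≤ x₂) (hp : 1 / 2 ≤ p) (hp1 : p ≤ 1)
    (u₁ u₂ u₃ : Fin 2 → ℂ)
    (h₁ : (∑ i, Complex.normSq (u₁ i)) = 1)
    (h₂ : (∑ i, Complex.normSq (u₂ i)) = 1)
    (h₃ : (∑ i, Complex.normSq (u₃ i)) = 1) :
    ∃ α ∈ Set.Icc (0 : ℝ) (Real.pi / 2),
      p * Complex.normSq (∑ r : Fin 2 × Fin 2 × Fin 2,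
          (starRingEnd ℂ) (u₁ r.1 * u₂ r.2.1 * u₃ r.2.2) * phi1 x₁ x₂ r)
        + (1 - p) * Complex.normSq (∑ r : Fin 2 × Fin 2 × Fin 2,
          (starRingEnd ℂ) (u₁ r.1 * u₂ r.2.1 * u₃ r.2.2) * phi2 x₁ x₂ r) ≤
      (p * x₁ ^ 2 + (1 - p) * x₂ ^ 2) * Real.cos α ^ 6
        + ((1 - p) * x₁ ^ 2 + p * x₂ ^ 2) * Real.sin α ^ 6
        + 2 * (2 * p - 1) * x₁ * x₂ * Real.cos α ^ 3 * Real.sin α ^ 3 := by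
  classical
  set A : ℂ := (starRingEnd ℂ) (u₁ 0 * u₂ 0 * u₃ 0) with hAdef
  set B : ℂ := (starRingEnd ℂ) (u₁ 1 * u₂ 1 * u₃ 1) with hBdef
  -- collapse the sums
  have hs1 : (∑ r : Fin 2 × Fin 2 × Fin 2,
      (starRingEnd ℂ) (u₁ r.1 * u₂ r.2.1 * u₃ r.2.2) * phi1 x₁ x₂ r)
      = A * x₁ + B * x₂ := by
    rw [Fintype.sum_prod_type]
    simp [Fintype.sum_prod_type, Fin.sum_univ_two, phi1, Prod.ext_iff, hAdef, hBdef]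
  have hs2 : (∑ r : Fin 2 × Fin 2 × Fin 2,
      (starRingEnd ℂ) (u₁ r.1 * u₂ r.2.1 * u₃ r.2.2) * phi2 x₁ x₂ r)
      = A * (-x₂) + B * x₁ := by
    rw [Fintype.sum_prod_type]
    simp [Fintype.sum_prod_type, Fin.sum_univ_two, phi2, Prod.ext_iff, hAdef, hBdef]
  set nA : ℝ := Complex.normSq A with hnAdef
  set nB : ℝ := Complex.normSq B with hnBdef
  set R : ℝ := (A * (starRingEnd ℂ) B).re with hRdef
  have e1 : Complex.normSq (A * x₁ + B * x₂)
      = x₁ ^ 2 * nA + x₂ ^ 2 * nB + 2 * x₁ * x₂ * R := normSq_comb A B x₁ x₂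
  have e2 : Complex.normSq (A * (-x₂) + B * x₁)
      = x₂ ^ 2 * nA + x₁ ^ 2 * nB - 2 * x₁ * x₂ * R := by
    have h := normSq_comb A B (-x₂) x₁
    rw [Complex.ofReal_neg] at h
    linarith only [h]
  -- product structure of nA, nB
  have hnA : nA = Complex.normSq (u₁ 0) * Complex.normSq (u₂ 0) * Complex.normSq (u₃ 0) := by
    simp [hnAdef, hAdef, Complex.normSq_conj, Complex.normSq_mul]
  have hnB : nB = Complex.normSq (u₁ 1) * Complex.normSq (u₂ 1) * Complex.normSq (u₃ 1) := by
    simp [hnBdef, hBdef, Complex.normSq_conj, Complex.normSq_mul]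
  -- sums of normSq
  have hu1 : Complex.normSq (u₁ 0) + Complex.normSq (u₁ 1) = 1 := by
    rw [← h₁, Fin.sum_univ_two]
  have hu2 : Complex.normSq (u₂ 0) + Complex.normSq (u₂ 1) = 1 := by
    rw [← h₂, Fin.sum_univ_two]
  have hu3 : Complex.normSq (u₃ 0) + Complex.normSq (u₃ 1) = 1 := by
    rw [← h₃, Fin.sum_univ_two]
  have n10 := Complex.normSq_nonneg (u₁ 0)
  have n11 := Complex.normSq_nonneg (u₁ 1)
  have n20 := Complex.normSq_nonneg (u₂ 0)
  have n21 := Complex.normSq_nonneg (u₂ 1)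
  have n30 := Complex.normSq_nonneg (u₃ 0)
  have n31 := Complex.normSq_nonneg (u₃ 1)
  -- pick u
  set u : ℝ := (Complex.normSq (u₁ 0) + Complex.normSq (u₂ 0) + Complex.normSq (u₃ 0)) / 3
    with hudef
  have hu0 : 0 ≤ u := by positivity
  have hu1' : u ≤ 1 := by
    rw [hudef]; linarith only [hu1, hu2, hu3, n11, n21, n31]
  have hAu : nA ≤ u ^ 3 := by
    rw [hnA, hudef]
    exact amgm3 _ _ _ n10 n20 n30
  have hBu : nB ≤ (1 - u) ^ 3 := by
    have h := amgm3 (Complex.normSq (u₁ 1)) (Complex.normSq (u₂ 1)) (Complex.normSq (u₃ 1))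
      n11 n21 n31
    have : (Complex.normSq (u₁ 1) + Complex.normSq (u₂ 1) + Complex.normSq (u₃ 1)) / 3
        = 1 - u := by rw [hudef]; linarith only [hu1, hu2, hu3]
    rw [hnB]
    calc Complex.normSq (u₁ 1) * Complex.normSq (u₂ 1) * Complex.normSq (u₃ 1)
        ≤ ((Complex.normSq (u₁ 1) + Complex.normSq (u₂ 1) + Complex.normSq (u₃ 1)) / 3) ^ 3 := h
      _ = (1 - u) ^ 3 := by rw [this]
  -- choose α
  refine ⟨Real.arccos (Real.sqrt u), ⟨Real.arccos_nonneg _,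
    Real.arccos_le_pi_div_two.2 (Real.sqrt_nonneg u)⟩, ?_⟩
  have hsqrtu : Real.sqrt u ≤ 1 := by
    rw [show (1:ℝ) = Real.sqrt 1 by simp]
    exact Real.sqrt_le_sqrt hu1'
  have hc : Real.cos (Real.arccos (Real.sqrt u)) = Real.sqrt u :=
    Real.cos_arccos (by linarith only [Real.sqrt_nonneg u]) hsqrtu
  have hsin : Real.sin (Real.arccos (Real.sqrt u)) = Real.sqrt (1 - u) := by
    rw [Real.sin_arccos, Real.sq_sqrt hu0]
  have hc2 : Real.cos (Real.arccos (Real.sqrt u)) ^ 2 = u := by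
    rw [hc, Real.sq_sqrt hu0]
  have hs2' : Real.sin (Real.arccos (Real.sqrt u)) ^ 2 = 1 - u := by
    rw [hsin, Real.sq_sqrt (by linarith only [hu1'])]
  set c : ℝ := Real.cos (Real.arccos (Real.sqrt u))
  set s : ℝ := Real.sin (Real.arccos (Real.sqrt u))
  have hcn : 0 ≤ c := hc ▸ Real.sqrt_nonneg u
  have hsn : 0 ≤ s := hsin ▸ Real.sqrt_nonneg _
  have hc6 : c ^ 6 = u ^ 3 := by rw [show (6:ℕ) = 2*3 by norm_num, pow_mul, hc2]
  have hs6 : s ^ 6 = (1 - u) ^ 3 := by rw [show (6:ℕ) = 2*3 by norm_num, pow_mul, hs2']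
  have hA6 : nA ≤ c ^ 6 := hc6 ▸ hAu
  have hB6 : nB ≤ s ^ 6 := hs6 ▸ hBu
  -- bound on R
  have hR2 : R ^ 2 ≤ nA * nB := by
    have h1 : R ^ 2 ≤ Complex.normSq (A * (starRingEnd ℂ) B) := by
      rw [Complex.normSq_apply, hRdef]
      have him := sq_nonneg (A * (starRingEnd ℂ) B).im
      nlinarith only [him]
    rw [hnAdef, hnBdef, ← Complex.normSq_conj B, ← Complex.normSq_mul]
    exact h1
  have hnAn : 0 ≤ nA := Complex.normSq_nonneg A
  have hnBn : 0 ≤ nB := Complex.normSq_nonneg B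
  have hcs : 0 ≤ c ^ 3 * s ^ 3 := by positivity
  have hRle : R ≤ c ^ 3 * s ^ 3 := by
    have h2 : R ^ 2 ≤ (c ^ 3 * s ^ 3) ^ 2 := by
      calc R ^ 2 ≤ nA * nB := hR2
        _ ≤ c ^ 6 * s ^ 6 :=
            mul_le_mul hA6 hB6 hnBn (by positivity)
        _ = (c ^ 3 * s ^ 3) ^ 2 := by ring
    calc R ≤ |R| := le_abs_self R
      _ = Real.sqrt (R ^ 2) := (Real.sqrt_sq_eq_abs R).symm
      _ ≤ Real.sqrt ((c ^ 3 * s ^ 3) ^ 2) := Real.sqrt_le_sqrt h2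
      _ = c ^ 3 * s ^ 3 := Real.sqrt_sq hcs
  -- final assembly
  rw [hs1, hs2, e1, e2]
  have hp0 : (0:ℝ) ≤ p := by linarith only [hp]
  have hp1' : (0:ℝ) ≤ 1 - p := by linarith only [hp1]
  have hK1 : 0 ≤ p * x₁ ^ 2 + (1 - p) * x₂ ^ 2 :=
    add_nonneg (mul_nonneg hp0 (sq_nonneg _)) (mul_nonneg hp1' (sq_nonneg _))
  have hK2 : 0 ≤ (1 - p) * x₁ ^ 2 + p * x₂ ^ 2 :=
    add_nonneg (mul_nonneg hp1' (sq_nonneg _)) (mul_nonneg hp0 (sq_nonneg _))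
  have hM : 0 ≤ 2 * (2 * p - 1) * x₁ * x₂ :=
    mul_nonneg (mul_nonneg (mul_nonneg (by norm_num) (by linarith only [hp])) hx₁) hx₂
  have t1 := mul_nonneg hK1 (sub_nonneg.2 hA6)
  have t2 := mul_nonneg hK2 (sub_nonneg.2 hB6)
  have t3 := mul_nonneg hM (sub_nonneg.2 hRle)
  linarith only [t1, t2, t3]
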